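/- Corollary: the EWS-last sequential rule under ρ* and the Over-and-Above rule under ρ̊ choose exactly the same set of individuals on I if and only if I is materially unaffected by the violation of the Equality Code under the Over-and-Above rule, i.e., no nonempty subset of 𝒥 ∩ I suffers from a violation. -/

import Mathlib

attribute [local instance] Classical.propDecidable

noncomputable section

variable {ι R : Type*} [Fintype ι] [DecidableEq ι] [Fintype R] [DecidableEq R]

/-- Eligibility sets: everyone is eligible for the open category (`none`),
and `elig c` is the set of members of VR-protected category `c`. -/
def eligOf (elig : R → Finset ι) : Option R → Finset ι
  | none => (Finset.univ : Finset ι)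
  | some c => elig c

/-- Aggregate choice: all individuals chosen across all categories. -/
def aggC (C : Finset ι → Option R → Finset ι) (I : Finset ι) : Finset ι :=
  Finset.univ.biUnion fun v => C I v

/-- `C` is a choice rule for capacities `q` and eligibility `elig`: each category chooses
eligible applicants up to capacity, and no individual is chosen by two categories. -/
def IsChoiceRule (q : Option R → ℕ) (elig : R → Finset ι)
    (C : Finset ι → Option R → Finset ι) : Prop :=
  ∀ I : Finset ι,
    (∀ v, C I v ⊆ I ∩ eligOf elig v) ∧
    (∀ v, (C I v).card ≤ q v) ∧
    (∀ v v', v ≠ v' → Disjoint (C I v) (C I v'))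

/-- Non-wastefulness: no position remains idle while an eligible applicant is unchosen. -/
def NonWasteful (q : Option R → ℕ) (elig : R → Finset ι)
    (C : Finset ι → Option R → Finset ι) : Prop :=
  ∀ (I : Finset ι) (v : Option R) (j : ι),
    j ∈ I → j ∉ aggC C I → (C I v).card < q v → j ∉ eligOf elig v

/-- No justified envy: a chosen individual outscores every eligible entirely-unchosen applicant. -/
def NoJustifiedEnvy (σ : ι → ℝ) (elig : R → Finset ι)
    (C : Finset ι → Option R → Finset ι) : Prop :=
  ∀ (I : Finset ι) (v : Option R) (i j : ι),
    i ∈ C I v → j ∈ I → j ∈ eligOf elig v → j ∉ aggC C I → σ j < σ i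

/-- Compliance with VR protections: a VR recipient implies the open category is full, with
every open-category recipient scoring strictly higher. -/
def CompliesVR (σ : ι → ℝ) (q : Option R → ℕ)
    (C : Finset ι → Option R → Finset ι) : Prop :=
  ∀ (I : Finset ι) (c : R) (i : ι), i ∈ C I (some c) →
    (C I none).card = q none ∧ ∀ j ∈ C I none, σ i < σ j

/-- The (at most) `k` highest merit-score members of `S`. -/
def topK (σ : ι → ℝ) (S : Finset ι) (k : ℕ) : Finset ι :=
  S.filter fun i => (S.filter fun j => σ i ≤ σ j).card ≤ k

/-- The Over-and-Above choice rule: open positions go to the top-merit applicants; then each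
VR category's quota is filled by the highest-merit remaining eligible members. -/
def OA (σ : ι → ℝ) (q : Option R → ℕ) (elig : R → Finset ι)
    (I : Finset ι) : Option R → Finset ι
  | none => topK σ I (q none)
  | some c => topK σ ((I \ topK σ I (q none)) ∩ elig c) (q (some c))

/-- The sequential choice rule: categories are processed in the order given by the list,
each filling its positions by serial dictatorship on the remaining eligible applicants. -/
def seqAssign (σ : ι → ℝ) (q : Option R → ℕ) (elig : R → Finset ι) :
    List (Option R) → Finset ι → Option R → Finset ι
  | [], _, _ => ∅
  | v :: rest, I, u =>
    let chosen := topK σ (I ∩ eligOf elig v) (q v)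
    if u = v then chosen else seqAssign σ q elig rest (I \ chosen) u

/-- Eligibility sets induced by a membership profile `ρ`. -/
def eligρ (ρ : ι → Finset R) (c : R) : Finset ι :=
  Finset.univ.filter fun i => c ∈ ρ i

/-- Aggregate outcome of the Over-and-Above rule under membership profile `ρ`. -/
def aggOA (σ : ι → ℝ) (q : Option R → ℕ) (ρ : ι → Finset R) (I : Finset ι) : Finset ι :=
  aggC (OA σ q (eligρ ρ)) I

/-- The profile `(ρ₋ⱼ, ρ̃ⱼ)`: each member of `J` is reassigned membership `{e}` only. -/
def updProf (ρ : ι → Finset R) (e : R) (J : Finset ι) : ι → Finset R :=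
  fun i => if i ∈ J then {e} else ρ i

/-- `J ⊆ 𝒥 ∩ I` suffers from a violation of the Equality Code under the Over-and-Above rule
with profile `ρ` for `I`: every member of `J` is unchosen under `ρ` but chosen once the
members of `J` are reassigned membership `{e}`. -/
def Suffers (σ : ι → ℝ) (q : Option R → ℕ) (ρ : ι → Finset R) (e : R)
    (JJ I J : Finset ι) : Prop :=
  J ⊆ JJ ∩ I ∧ ∀ j ∈ J, j ∉ aggOA σ q ρ I ∧ j ∈ aggOA σ q (updProf ρ e J) I

/-- `J` is a maximal set of individuals suffering from a violation of the Equality Code. -/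
def MaximalSuffers (σ : ι → ℝ) (q : Option R → ℕ) (ρ : ι → Finset R) (e : R)
    (JJ I J : Finset ι) : Prop :=
  J ⊆ (JJ ∩ I) \ aggOA σ q ρ I ∧
  Suffers σ q ρ e JJ I J ∧
  ∀ J' ⊆ (JJ ∩ I) \ aggOA σ q ρ I, J ⊂ J' →
    ¬ Suffers σ q ρ e JJ I J' ∧ J ⊆ aggOA σ q (updProf ρ e J') I

/-- The expanded profile `ρ*`: members of `𝒥` get an additional membership of `e`. -/
def ρstar (ρ : ι → Finset R) (e : R) (JJ : Finset ι) : ι → Finset R :=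
  fun i => if i ∈ JJ then insert e (ρ i) else ρ i

/-- Aggregate outcome of the sequential choice rule under profile `ρ` and the given order. -/
def aggSeq (σ : ι → ℝ) (q : Option R → ℕ) (ρ : ι → Finset R)
    (order : List (Option R)) (I : Finset ι) : Finset ι :=
  Finset.univ.biUnion (seqAssign σ q (eligρ ρ) order I)

/-- The EWS-last order of precedence: open first, caste-based categories (listed by `L`), `e` last. -/
def ewsLastOrder (e : R) (L : List R) : List (Option R) :=
  (none : Option R) :: (L.map some ++ [some e])

/-!
Under `ρ*` the categories of `L` face the same eligible applicants as under the Over-and-Above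
rule: their eligibility sets are disjoint, so processing them in sequence changes nothing. The
two outcomes can therefore differ only in category `e`, with `k = q (some e)` positions. The
Over-and-Above rule gives them to the top `k` of `X`, the `e`-eligible applicants left over by
the open category; the EWS-last rule gives them to the top `k` of `X ∪ Y`, where `Y` consists of
the members of `𝒥 ∩ I` rejected by the Over-and-Above rule. These agree iff no member of `Y`
reaches the top `k` of `X ∪ Y`. A set `J ⊆ Y` suffers a violation exactly when `J` lies in the
top `k` of `X ∪ J`, and such a nonempty `J` exists iff `Y` meets the top `k` of `X ∪ Y`.
-/
set_option linter.unusedSectionVars false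

open Finset

section TopK

variable {σ : ι → ℝ} {S T X Y : Finset ι} {k : ℕ} {i : ι}

lemma mem_topK : i ∈ topK σ S k ↔ i ∈ S ∧ (S.filter fun j => σ i ≤ σ j).card ≤ k :=
  mem_filter

lemma topK_subset : topK σ S k ⊆ S :=
  filter_subset _ _

lemma mem_topK_of_subset (hTS : T ⊆ S) (hi : i ∈ topK σ S k) (hiT : i ∈ T) :
    i ∈ topK σ T k :=
  mem_topK.2 ⟨hiT, (card_le_card (filter_subset_filter _ hTS)).trans (mem_topK.1 hi).2⟩

lemma card_topK_le : (topK σ S k).card ≤ k := by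
  obtain h | h := (topK σ S k).eq_empty_or_nonempty
  · simp [h]
  obtain ⟨i, hi, hmin⟩ := exists_min_image _ σ h
  calc (topK σ S k).card ≤ (S.filter fun j => σ i ≤ σ j).card :=
        card_le_card fun j hj => mem_filter.2 ⟨topK_subset hj, hmin j hj⟩
    _ ≤ k := (mem_topK.1 hi).2

lemma le_card_topK (hσ : Function.Injective σ) (hiS : i ∈ S) (hi : i ∉ topK σ S k) :
    k ≤ (topK σ S k).card := by
  -- the best rejected applicant `m`: more than `k` applicants score at least `σ m`, and all
  -- of them but `m` are chosen
  obtain ⟨m, hm, hmax⟩ := exists_max_image (S \ topK σ S k) σ ⟨i, mem_sdiff.2 ⟨hiS, hi⟩⟩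
  obtain ⟨hmS, hmk⟩ := mem_sdiff.1 hm
  have hlt : k < (S.filter fun j => σ m ≤ σ j).card :=
    not_le.1 fun h => hmk (mem_topK.2 ⟨hmS, h⟩)
  have hsub : (S.filter fun j => σ m ≤ σ j) ⊆ insert m (topK σ S k) := by
    intro l hl
    obtain ⟨hlS, hml⟩ := mem_filter.1 hl
    by_contra h
    rw [mem_insert, not_or] at h
    exact h.1 (hσ (le_antisymm (hmax l (mem_sdiff.2 ⟨hlS, h.2⟩)) hml))
  have := (card_le_card hsub).trans (card_insert_le _ _)
  omega

lemma topK_eq_of_subset (hσ : Function.Injective σ) (hST : topK σ S k ⊆ T) (hTS : T ⊆ S) :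
    topK σ T k = topK σ S k := by
  refine (eq_of_subset_of_card_le (fun i hi => mem_topK_of_subset hTS hi (hST hi)) ?_).symm
  by_cases hS : S ⊆ topK σ S k
  · rw [subset_antisymm hTS (hS.trans hST)]
  · obtain ⟨m, hmS, hm⟩ := not_subset.1 hS
    exact card_topK_le.trans (le_card_topK hσ hmS hm)

lemma topK_union_subset_left (h : Disjoint (topK σ (X ∪ Y) k) Y) : topK σ (X ∪ Y) k ⊆ X :=
  h.left_le_of_le_sup_right topK_subset

lemma topK_union_eq_iff (hσ : Function.Injective σ) (hXY : Disjoint X Y) :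
    topK σ (X ∪ Y) k = topK σ X k ↔ Disjoint (topK σ (X ∪ Y) k) Y := by
  refine ⟨fun h => h ▸ hXY.mono_left topK_subset, fun h => ?_⟩
  exact (topK_eq_of_subset hσ (topK_union_subset_left h) subset_union_left).symm

lemma disjoint_topK_union_iff (hσ : Function.Injective σ) :
    Disjoint (topK σ (X ∪ Y) k) Y ↔ ∀ J ⊆ Y, J.Nonempty → ¬ J ⊆ topK σ (X ∪ J) k := by
  constructor
  · rintro h J hJY ⟨j, hj⟩ hJ
    rw [topK_eq_of_subset hσ ((topK_union_subset_left h).trans subset_union_left)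
      (union_subset_union_right hJY)] at hJ
    exact disjoint_left.1 h (hJ hj) (hJY hj)
  · intro h
    by_contra hd
    obtain ⟨i, hi, hiY⟩ := not_disjoint_iff.1 hd
    refine h _ inter_subset_right ⟨i, mem_inter.2 ⟨hi, hiY⟩⟩ fun j hj => ?_
    exact mem_topK_of_subset (union_subset_union_right inter_subset_right)
      (mem_inter.1 hj).1 (mem_union_right _ hj)

end TopK

section Sequential

variable {σ : ι → ℝ} {q : Option R → ℕ} {elig : R → Finset ι}

@[simp]
lemma eligOf_none : eligOf elig none = univ := rfl

@[simp]
lemma eligOf_some (c : R) : eligOf elig (some c) = elig c := rfl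

lemma seqAssign_eq_empty_of_not_mem {os : List (Option R)} {u : Option R} (hu : u ∉ os)
    (I : Finset ι) : seqAssign σ q elig os I u = ∅ := by
  induction os generalizing I with
  | nil => rfl
  | cons v rest ih =>
    rw [List.mem_cons, not_or] at hu
    simp only [seqAssign, if_neg hu.1, ih hu.2]

lemma biUnion_seqAssign_cons {v : Option R} {rest : List (Option R)} (hv : v ∉ rest)
    (I : Finset ι) :
    univ.biUnion (seqAssign σ q elig (v :: rest) I) =
      topK σ (I ∩ eligOf elig v) (q v) ∪
        univ.biUnion (seqAssign σ q elig rest (I \ topK σ (I ∩ eligOf elig v) (q v))) := by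
  ext i
  simp only [mem_biUnion, mem_univ, true_and, mem_union, seqAssign]
  constructor
  · rintro ⟨u, hu⟩
    split_ifs at hu with h
    · exact Or.inl hu
    · exact Or.inr ⟨u, hu⟩
  · rintro (h | ⟨u, hu⟩)
    · exact ⟨v, by rwa [if_pos rfl]⟩
    · have huv : u ≠ v := by
        rintro rfl
        simp [seqAssign_eq_empty_of_not_mem hv] at hu
      exact ⟨u, by rwa [if_neg huv]⟩

/-- Categories with pairwise disjoint eligibility sets do not compete: processing them in
sequence chooses the same applicants as letting each of them choose from all of `W`. -/
lemma biUnion_seqAssign_map_some_append {M : List R} (hM : M.Nodup)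
    (hdisj : M.Pairwise fun c c' => Disjoint (elig c) (elig c')) {v : Option R}
    (hv : v ∉ M.map some) (W : Finset ι) :
    univ.biUnion (seqAssign σ q elig (M.map some ++ [v]) W) =
      M.toFinset.biUnion (fun c => topK σ (W ∩ elig c) (q (some c))) ∪
        topK σ ((W \ M.toFinset.biUnion fun c => topK σ (W ∩ elig c) (q (some c))) ∩
          eligOf elig v) (q v) := by
  induction M generalizing W with
  | nil =>
    rw [List.map_nil, List.nil_append, biUnion_seqAssign_cons List.not_mem_nil]
    simp [seqAssign]
  | cons c M ih =>
    rw [List.nodup_cons] at hM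
    rw [List.pairwise_cons] at hdisj
    rw [List.map_cons, List.mem_cons, not_or] at hv
    have hc : some c ∉ M.map some ++ [v] := by simp [hM.1, Ne.symm hv.1]
    have hpool : ∀ c' ∈ M.toFinset, (W \ topK σ (W ∩ elig c) (q (some c))) ∩ elig c' =
        W ∩ elig c' := by
      intro c' hc'
      rw [sdiff_inter_right_comm, sdiff_eq_self_of_disjoint]
      exact ((hdisj.1 c' (List.mem_toFinset.1 hc')).mono_left
        (topK_subset.trans inter_subset_right)).symm.mono_left inter_subset_right
    rw [List.map_cons, List.cons_append, biUnion_seqAssign_cons hc, eligOf_some,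
      ih hM.2 hdisj.2 hv.2, biUnion_congr rfl fun c' hc' => by rw [hpool c' hc'],
      List.toFinset_cons, biUnion_insert, union_assoc, sdiff_sdiff_left, sup_eq_union]

end Sequential

lemma union_right_inj_of_disjoint {s t u : Finset ι} (ht : Disjoint s t) (hu : Disjoint s u) :
    s ∪ t = s ∪ u ↔ t = u :=
  ⟨fun h => by rw [← union_sdiff_cancel_left ht, h, union_sdiff_cancel_left hu], congrArg _⟩

section Profiles

variable {ρ : ι → Finset R} {c c' e : R} {J : Finset ι}

@[simp]
lemma mem_eligρ {i : ι} : i ∈ eligρ ρ c ↔ c ∈ ρ i := by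
  simp [eligρ]

lemma eligρ_ρstar_of_ne (h : c ≠ e) : eligρ (ρstar ρ e J) c = eligρ ρ c := by
  ext i
  by_cases hi : i ∈ J <;> simp [ρstar, hi, h]

lemma eligρ_ρstar_self : eligρ (ρstar ρ e J) e = eligρ ρ e ∪ J := by
  ext i
  by_cases hi : i ∈ J <;> simp [ρstar, hi]

lemma eligρ_updProf_of_ne (h : c ≠ e) : eligρ (updProf ρ e J) c = eligρ ρ c \ J := by
  ext i
  by_cases hi : i ∈ J <;> simp [updProf, hi, h]

lemma eligρ_updProf_self : eligρ (updProf ρ e J) e = eligρ ρ e ∪ J := by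
  ext i
  by_cases hi : i ∈ J <;> simp [updProf, hi]

lemma disjoint_eligρ (hρ : ∀ i, (ρ i).card ≤ 1) (h : c ≠ c') :
    Disjoint (eligρ ρ c) (eligρ ρ c') := by
  refine disjoint_left.2 fun i hi hi' => ?_
  have := Finset.one_lt_card.2 ⟨c, mem_eligρ.1 hi, c', mem_eligρ.1 hi', h⟩
  exact (hρ i).not_gt this

end Profiles

lemma mem_aggC {C : Finset ι → Option R → Finset ι} {I : Finset ι} {i : ι} :
    i ∈ aggC C I ↔ ∃ v, i ∈ C I v := by
  simp [aggC]

lemma aggC_eq_union (C : Finset ι → Option R → Finset ι) (I : Finset ι) {e : R} {L : List R}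
    (hL : ∀ c, c ≠ e → c ∈ L) :
    aggC C I = C I none ∪ L.toFinset.biUnion (fun c => C I (some c)) ∪ C I (some e) := by
  ext i
  simp only [mem_aggC, Option.exists, mem_union, mem_biUnion, List.mem_toFinset]
  constructor
  · rintro (h | ⟨c, hc⟩)
    · exact Or.inl (Or.inl h)
    · by_cases hce : c = e
      · exact Or.inr (hce ▸ hc)
      · exact Or.inl (Or.inr ⟨c, hL c hce, hc⟩)
  · rintro ((h | ⟨c, -, hc⟩) | h)
    exacts [Or.inl h, Or.inr ⟨c, hc⟩, Or.inr ⟨e, h⟩]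

section EWSLast

variable {σ : ι → ℝ} {q : Option R → ℕ} {ρ : ι → Finset R} {e : R} {JJ I : Finset ι}
  {L : List R}

lemma aggOA_eq_union (hL : ∀ c, c ≠ e → c ∈ L) :
    aggOA σ q ρ I = topK σ I (q none) ∪ L.toFinset.biUnion (fun c => OA σ q (eligρ ρ) I (some c)) ∪
      topK σ ((I \ topK σ I (q none)) ∩ eligρ ρ e) (q (some e)) :=
  aggC_eq_union _ I hL

lemma aggSeq_ewsLastOrder (hρ : ∀ i, (ρ i).card ≤ 1) (hL : L.Nodup) (heL : e ∉ L) :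
    aggSeq σ q (ρstar ρ e JJ) (ewsLastOrder e L) I =
      topK σ I (q none) ∪ L.toFinset.biUnion (fun c => OA σ q (eligρ ρ) I (some c)) ∪
        topK σ ((I \ (topK σ I (q none) ∪
          L.toFinset.biUnion fun c => OA σ q (eligρ ρ) I (some c))) ∩ (eligρ ρ e ∪ JJ))
          (q (some e)) := by
  have hne : ∀ c ∈ L, c ≠ e := fun c hc h => heL (h ▸ hc)
  have hdisj : L.Pairwise fun c c' =>
      Disjoint (eligρ (ρstar ρ e JJ) c) (eligρ (ρstar ρ e JJ) c') :=
    hL.pairwise_of_forall_ne fun c hc c' hc' h => by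
      rw [eligρ_ρstar_of_ne (hne c hc), eligρ_ρstar_of_ne (hne c' hc')]
      exact disjoint_eligρ hρ h
  rw [aggSeq, ewsLastOrder, biUnion_seqAssign_cons (by simp), eligOf_none, inter_univ,
    biUnion_seqAssign_map_some_append hL hdisj (by simpa using heL), eligOf_some,
    eligρ_ρstar_self, sdiff_sdiff_left, sup_eq_union, union_assoc,
    biUnion_congr rfl fun c hc => by rw [eligρ_ρstar_of_ne (hne c (List.mem_toFinset.1 hc))]]
  rfl

lemma ewsLast_pool_eq (hρ : ∀ i, (ρ i).card ≤ 1) (heL : e ∉ L) (hL : ∀ c, c ≠ e → c ∈ L)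
    (hJJ : ∀ j ∈ JJ, e ∉ ρ j) :
    (I \ (topK σ I (q none) ∪ L.toFinset.biUnion fun c => OA σ q (eligρ ρ) I (some c))) ∩
        (eligρ ρ e ∪ JJ) =
      (I \ topK σ I (q none)) ∩ eligρ ρ e ∪ (JJ ∩ I) \ aggOA σ q ρ I := by
  have hU : Disjoint (L.toFinset.biUnion fun c => OA σ q (eligρ ρ) I (some c)) (eligρ ρ e) :=
    (disjoint_biUnion_left _ _ _).2 fun c hc =>
      (disjoint_eligρ hρ fun h : c = e => heL (h ▸ List.mem_toFinset.1 hc)).mono_left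
        (topK_subset.trans inter_subset_right)
  have hA : Disjoint (topK σ ((I \ topK σ I (q none)) ∩ eligρ ρ e) (q (some e))) JJ :=
    disjoint_left.2 fun i hi hiJ => hJJ i hiJ (mem_eligρ.1 (inter_subset_right (topK_subset hi)))
  rw [aggOA_eq_union hL]
  ext i
  rw [disjoint_left] at hU hA
  have hiU := @hU i
  have hiA := @hA i
  simp only [mem_inter, mem_sdiff, mem_union] at hiU hiA ⊢
  tauto

lemma aggSeq_ewsLastOrder_eq_aggOA_iff (hρ : ∀ i, (ρ i).card ≤ 1) (hLnd : L.Nodup)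
    (heL : e ∉ L) (hL : ∀ c, c ≠ e → c ∈ L) (hJJ : ∀ j ∈ JJ, e ∉ ρ j) :
    aggSeq σ q (ρstar ρ e JJ) (ewsLastOrder e L) I = aggOA σ q ρ I ↔
      topK σ ((I \ topK σ I (q none)) ∩ eligρ ρ e ∪ (JJ ∩ I) \ aggOA σ q ρ I) (q (some e)) =
        topK σ ((I \ topK σ I (q none)) ∩ eligρ ρ e) (q (some e)) := by
  have hpool := ewsLast_pool_eq (σ := σ) (q := q) (I := I) hρ heL hL hJJ
  have hdisj : Disjoint
      (topK σ I (q none) ∪ L.toFinset.biUnion fun c => OA σ q (eligρ ρ) I (some c))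
      ((I \ topK σ I (q none)) ∩ eligρ ρ e ∪ (JJ ∩ I) \ aggOA σ q ρ I) :=
    hpool ▸ disjoint_sdiff.mono_right inter_subset_left
  nth_rw 1 [aggOA_eq_union hL]
  rw [aggSeq_ewsLastOrder hρ hLnd heL, hpool,
    union_right_inj_of_disjoint (hdisj.mono_right topK_subset)
      (hdisj.mono_right (topK_subset.trans subset_union_left))]

lemma sdiff_aggOA_subset : (JJ ∩ I) \ aggOA σ q ρ I ⊆ I \ topK σ I (q none) :=
  fun _ hi => mem_sdiff.2 ⟨inter_subset_right (sdiff_subset hi),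
    fun h => (mem_sdiff.1 hi).2 (mem_aggC.2 ⟨none, h⟩)⟩

lemma mem_aggOA_updProf {J : Finset ι} {j : ι} (hJ : J ⊆ I \ topK σ I (q none)) (hj : j ∈ J) :
    j ∈ aggOA σ q (updProf ρ e J) I ↔
      j ∈ topK σ ((I \ topK σ I (q none)) ∩ eligρ ρ e ∪ J) (q (some e)) := by
  have hpool : (I \ topK σ I (q none)) ∩ eligρ (updProf ρ e J) e =
      (I \ topK σ I (q none)) ∩ eligρ ρ e ∪ J := by
    rw [eligρ_updProf_self, inter_union_distrib_left, inter_eq_right.2 hJ]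
  rw [aggOA, mem_aggC, Option.exists]
  constructor
  · rintro (h | ⟨c, hc⟩)
    · exact absurd h (mem_sdiff.1 (hJ hj)).2
    · by_cases hce : c = e
      · rw [hce] at hc
        have hc : j ∈ topK σ ((I \ topK σ I (q none)) ∩ eligρ (updProf ρ e J) e) _ := hc
        rwa [hpool] at hc
      · have := inter_subset_right (topK_subset hc)
        rw [eligρ_updProf_of_ne hce] at this
        exact absurd hj (mem_sdiff.1 this).2
  · exact fun h => Or.inr ⟨e, show j ∈ topK σ (_ ∩ eligρ (updProf ρ e J) e) _ by rwa [hpool]⟩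

lemma suffers_iff {J : Finset ι} (hJ : J ⊆ JJ ∩ I) :
    Suffers σ q ρ e JJ I J ↔ J ⊆ (JJ ∩ I) \ aggOA σ q ρ I ∧
      J ⊆ topK σ ((I \ topK σ I (q none)) ∩ eligρ ρ e ∪ J) (q (some e)) := by
  have hrej : J ⊆ (JJ ∩ I) \ aggOA σ q ρ I ↔ ∀ j ∈ J, j ∉ aggOA σ q ρ I :=
    ⟨fun h j hj => (mem_sdiff.1 (h hj)).2, fun h j hj => mem_sdiff.2 ⟨hJ hj, h j hj⟩⟩
  constructor
  · rintro ⟨-, h⟩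
    have hJY := hrej.2 fun j hj => (h j hj).1
    exact ⟨hJY, fun j hj =>
      (mem_aggOA_updProf (hJY.trans sdiff_aggOA_subset) hj).1 (h j hj).2⟩
  · rintro ⟨hJY, htop⟩
    exact ⟨hJ, fun j hj => ⟨hrej.1 hJY j hj,
      (mem_aggOA_updProf (hJY.trans sdiff_aggOA_subset) hj).2 (htop hj)⟩⟩

end EWSLast

/-- Corollary: the EWS-last sequential rule under `ρ*` and the Over-and-Above
rule under `ρ̊` choose the same individuals on `I` iff `I` is materially unaffected by the
violation of the Equality Code, i.e. no nonempty subset of `𝒥 ∩ I` suffers a violation. -/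
theorem ewsLast_eq_OA_iff_unaffected (σ : ι → ℝ) (hσ : Function.Injective σ)
    (q : Option R → ℕ) (ρ : ι → Finset R) (hρ : ∀ i, (ρ i).card ≤ 1) (e : R)
    (JJ : Finset ι) (hJJ : ∀ j ∈ JJ, (ρ j).Nonempty ∧ e ∉ ρ j)
    (L : List R) (hLnd : L.Nodup) (heL : e ∉ L) (hLall : ∀ c : R, c ≠ e → c ∈ L) :
    ∀ I : Finset ι,
      (aggSeq σ q (ρstar ρ e JJ) (ewsLastOrder e L) I = aggOA σ q ρ I) ↔
        ∀ J : Finset ι, J.Nonempty → J ⊆ JJ ∩ I → ¬ Suffers σ q ρ e JJ I J := by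
  intro I
  have hJJe : ∀ j ∈ JJ, e ∉ ρ j := fun j hj => (hJJ j hj).2
  have hdisj : Disjoint ((I \ topK σ I (q none)) ∩ eligρ ρ e) ((JJ ∩ I) \ aggOA σ q ρ I) :=
    disjoint_left.2 fun i hiX hiY =>
      hJJe i (inter_subset_left (sdiff_subset hiY)) (mem_eligρ.1 (inter_subset_right hiX))
  rw [aggSeq_ewsLastOrder_eq_aggOA_iff hρ hLnd heL hLall hJJe, topK_union_eq_iff hσ hdisj,
    disjoint_topK_union_iff hσ]
  constructor
  · intro h J hJ hJI hJs
    obtain ⟨hJY, htop⟩ := (suffers_iff hJI).1 hJs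
    exact h J hJY hJ htop
  · intro h J hJY hJ htop
    have hJI : J ⊆ JJ ∩ I := hJY.trans sdiff_subset
    exact h J hJ hJI ((suffers_iff hJI).2 ⟨hJY, htop⟩)
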